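/- arXiv:2112.12401 — 2 statements merged into one kernel-verified Lean document; each statement's English description precedes it below -/
import Mathlib

section
/- For every integer d ≥ 2, the family of polynomials (T'^{d−j−1}·T''^{i−1}·Ψ_{j−i}) indexed by pairs (i,j) with 1 ≤ i ≤ j ≤ d−1 is a ℂ-basis of the homogeneous component of degree d−2 of ℂ[T,T',T''] (each variable having degree 1). -/
/-!
`Ψ_n` is homogeneous of degree `n` and equals `T^n` plus terms of lower degree in `T`. Hence
`T'^{d-j-1} T''^{i-1} Ψ_{j-i}` is the monomial `T^{j-i} T'^{d-j-1} T''^{i-1}` plus monomials of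
degree `d - 2` with smaller `T`-exponent, and `(i, j) ↦ T^{j-i} T'^{d-j-1} T''^{i-1}` is a bijection
onto the monomials of degree `d - 2`. So the family is unitriangular with respect to the monomial
basis of the degree `d - 2` component ordered by `T`-exponent: it spans, since each monomial is
recovered by induction on its `T`-exponent, and it is linearly independent, since it has as many
members as the dimension of its span.
-/

open MvPolynomial

/-- `Ψ₀ = 1`, `Ψ₁ = T`, `Ψ_{i+2} = T·Ψ_{i+1} − T'·T''·Ψ_i`, where `T = X 0`, `T' = X 1`,
`T'' = X 2`. -/
noncomputable def Psi : ℕ → MvPolynomial (Fin 3) ℂ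
  | 0 => 1
  | 1 => X 0
  | (n + 2) => X 0 * Psi (n + 1) - X 1 * X 2 * Psi n

open Submodule Set

section Unitriangular

variable {ι R M : Type*} [Ring R] [AddCommGroup M] [Module R M]

theorem span_range_eq_of_sub_mem_span_lt {b v : ι → M} (μ : ι → ℕ)
    (h : ∀ i, v i - b i ∈ span R (b '' {k | μ k < μ i})) :
    span R (range v) = span R (range b) := by
  apply le_antisymm <;> rw [span_le] <;> rintro _ ⟨i, rfl⟩
  · have hlower := span_mono (image_subset_range b _) (h i)
    simpa using add_mem hlower (subset_span ⟨i, rfl⟩ : b i ∈ span R (range b))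
  · induction hn : μ i using Nat.strong_induction_on generalizing i with
    | _ n ih =>
      have hlower : span R (b '' {k | μ k < μ i}) ≤ span R (range v) := by
        rw [span_le]
        rintro _ ⟨k, hk, rfl⟩
        exact ih _ (hn ▸ hk) k rfl
      simpa using sub_mem (subset_span ⟨i, rfl⟩ : v i ∈ span R (range v)) (hlower (h i))

theorem LinearIndependent.of_span_range_eq {K V : Type*} [DivisionRing K] [AddCommGroup V]
    [Module K V] [Finite ι] {b v : ι → V} (hb : LinearIndependent K b)
    (h : span K (range v) = span K (range b)) : LinearIndependent K v := by
  have := Fintype.ofFinite ι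
  rw [linearIndependent_iff_card_eq_finrank_span] at hb ⊢
  rwa [Set.finrank, h]

end Unitriangular

theorem isHomogeneous_Psi : ∀ n, (Psi n).IsHomogeneous n
  | 0 => isHomogeneous_one _ _
  | 1 => isHomogeneous_X _ _
  | n + 2 => by
    have hT := (isHomogeneous_X ℂ (0 : Fin 3)).mul (isHomogeneous_Psi (n + 1))
    have hT'T'' := ((isHomogeneous_X ℂ (1 : Fin 3)).mul (isHomogeneous_X ℂ 2)).mul
      (isHomogeneous_Psi n)
    rw [Psi]
    exact ((show 1 + (n + 1) = n + 2 by omega) ▸ hT).sub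
      ((show 1 + 1 + n = n + 2 by omega) ▸ hT'T'')

theorem degreeOf_Psi_sub_X_pow_le : ∀ n, degreeOf 0 (Psi (n + 1) - X 0 ^ (n + 1)) ≤ n
  | 0 => by simp [Psi]
  | n + 1 => by
    have hrec : Psi (n + 2) - X 0 ^ (n + 2) =
        X 0 * (Psi (n + 1) - X 0 ^ (n + 1)) - X 1 * X 2 * Psi n := by
      rw [Psi]
      ring
    have hT'T'' : degreeOf 0 (X 1 * X 2 : MvPolynomial (Fin 3) ℂ) ≤ 0 := by
      simpa [degreeOf_X] using degreeOf_mul_le 0 (X 1 : MvPolynomial (Fin 3) ℂ) (X 2)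
    have hPsi : degreeOf 0 (Psi n) ≤ n :=
      (degreeOf_le_totalDegree _ 0).trans (isHomogeneous_Psi n).totalDegree_le
    rw [hrec]
    refine (degreeOf_sub_le ..).trans (max_le ?_ ?_)
    · have := degreeOf_Psi_sub_X_pow_le n
      refine (degreeOf_mul_le ..).trans ?_
      simp only [degreeOf_X_self]
      omega
    · refine (degreeOf_mul_le ..).trans ?_
      omega

abbrev TriangleIndex (d : ℕ) := {p : ℕ × ℕ // 1 ≤ p.1 ∧ p.1 ≤ p.2 ∧ p.2 ≤ d - 1}

noncomputable def psiFamily (d : ℕ) (p : TriangleIndex d) : MvPolynomial (Fin 3) ℂ :=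
  X 1 ^ (d - p.1.2 - 1) * X 2 ^ (p.1.1 - 1) * Psi (p.1.2 - p.1.1)

namespace TriangleIndex

variable {d : ℕ}

instance : Finite (TriangleIndex d) :=
  ((Set.finite_Iic (d, d)).subset
    fun p (hp : 1 ≤ p.1 ∧ p.1 ≤ p.2 ∧ p.2 ≤ d - 1) => ⟨by omega, by omega⟩).to_subtype

def gap (p : TriangleIndex d) : ℕ := p.1.2 - p.1.1

/-- The exponent of `T^{j-i} T'^{d-j-1} T''^{i-1}`, the leading monomial of `psiFamily d (i, j)`. -/
noncomputable def exponent (p : TriangleIndex d) : Fin 3 →₀ ℕ :=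
  Finsupp.single 0 p.gap + Finsupp.single 1 (d - p.1.2 - 1) + Finsupp.single 2 (p.1.1 - 1)

@[simp] lemma exponent_apply_zero (p : TriangleIndex d) : p.exponent 0 = p.gap := by
  simp [exponent]

@[simp] lemma exponent_apply_one (p : TriangleIndex d) : p.exponent 1 = d - p.1.2 - 1 := by
  simp [exponent]

@[simp] lemma exponent_apply_two (p : TriangleIndex d) : p.exponent 2 = p.1.1 - 1 := by
  simp [exponent]

theorem exponent_injective : Function.Injective (exponent (d := d)) := by
  intro p q h
  have h1 := congr($h 1)
  have h2 := congr($h 2)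
  simp only [exponent_apply_one, exponent_apply_two] at h1 h2
  obtain ⟨hp1, hp2, hp3⟩ := p.2
  obtain ⟨hq1, hq2, hq3⟩ := q.2
  exact Subtype.ext (Prod.ext (by omega) (by omega))

theorem range_exponent (hd : 2 ≤ d) : range (exponent (d := d)) = {m | m.degree = d - 2} := by
  ext m
  simp only [mem_range, mem_ofPred_eq, Finsupp.degree_eq_sum, Fin.sum_univ_three]
  constructor
  · rintro ⟨⟨⟨i, j⟩, hi, hij, hj⟩, rfl⟩
    simp only [exponent_apply_zero, exponent_apply_one, exponent_apply_two, gap]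
    omega
  · intro hm
    refine ⟨⟨(m 2 + 1, d - 1 - m 1), by omega, by omega, by omega⟩, ?_⟩
    ext k
    fin_cases k <;> simp [gap] <;> omega

theorem monomial_exponent (p : TriangleIndex d) :
    monomial p.exponent (1 : ℂ) = X 0 ^ p.gap * X 1 ^ (d - p.1.2 - 1) * X 2 ^ (p.1.1 - 1) := by
  rw [exponent, monomial_add_single, monomial_add_single, ← X_pow_eq_monomial]

end TriangleIndex

open TriangleIndex

theorem linearIndependent_monomial_exponent (d : ℕ) :
    LinearIndependent ℂ fun p : TriangleIndex d => monomial p.exponent (1 : ℂ) := by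
  have := (basisMonomials (Fin 3) ℂ).linearIndependent.comp _ (exponent_injective (d := d))
  rwa [coe_basisMonomials] at this

theorem span_monomial_exponent {d : ℕ} (hd : 2 ≤ d) :
    span ℂ (range fun p : TriangleIndex d => monomial p.exponent (1 : ℂ)) =
      homogeneousSubmodule (Fin 3) ℂ (d - 2) := by
  change span ℂ (range ((monomial · 1) ∘ exponent)) = _
  rw [homogeneousSubmodule_eq_finsupp_supported, range_comp, range_exponent hd]
  exact (restrictSupport_eq_span ℂ _).symm

theorem mem_span_monomial_exponent_of_lt_gap {d g : ℕ} (hd : 2 ≤ d) {f : MvPolynomial (Fin 3) ℂ}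
    (hf : f.IsHomogeneous (d - 2)) (hlt : ∀ m ∈ f.support, m 0 < g) :
    f ∈ span ℂ ((fun q : TriangleIndex d => monomial q.exponent (1 : ℂ)) '' {q | q.gap < g}) := by
  rw [← image_image (monomial · (1 : ℂ)) exponent, ← restrictSupport_eq_span,
    mem_restrictSupport_iff]
  intro m hm
  obtain ⟨q, rfl⟩ : m ∈ range exponent := by
    rw [range_exponent hd, mem_ofPred_eq, Finsupp.degree_eq_weight_one]
    exact hf (mem_support_iff.mp hm)
  exact ⟨q, by simpa using hlt _ hm, rfl⟩

theorem psiFamily_sub_monomial_mem_span {d : ℕ} (hd : 2 ≤ d) (p : TriangleIndex d) :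
    psiFamily d p - monomial p.exponent 1 ∈
      span ℂ ((fun q : TriangleIndex d => monomial q.exponent (1 : ℂ)) '' {q | q.gap < p.gap}) := by
  have hfactor : psiFamily d p - monomial p.exponent 1 =
      (Psi p.gap - X 0 ^ p.gap) * X 1 ^ (d - p.1.2 - 1) * X 2 ^ (p.1.1 - 1) := by
    rw [monomial_exponent, psiFamily, gap]
    ring
  have hhom : (psiFamily d p - monomial p.exponent 1).IsHomogeneous (d - 2) := by
    obtain ⟨hi, hij, hj⟩ := p.2
    rw [hfactor, show d - 2 = p.gap + (d - p.1.2 - 1) + (p.1.1 - 1) by simp only [gap]; omega]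
    exact (((isHomogeneous_Psi _).sub (isHomogeneous_X_pow _ _)).mul
      (isHomogeneous_X_pow _ _)).mul (isHomogeneous_X_pow _ _)
  refine mem_span_monomial_exponent_of_lt_gap hd hhom fun m hm => ?_
  have hm0 := monomial_le_degreeOf 0 hm
  rw [hfactor, degreeOf_mul_X_pow_of_ne _ (by decide),
    degreeOf_mul_X_pow_of_ne _ (by decide)] at hm0
  rw [hfactor] at hm
  cases hn : p.gap with
  | zero => simp [hn, Psi] at hm
  | succ n => exact (hn ▸ hm0).trans_lt (Nat.lt_succ_of_le (degreeOf_Psi_sub_X_pow_le n))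

/-- for `d ≥ 2`, the family `(T'^{d−j−1}·T''^{i−1}·Ψ_{j−i})_{1 ≤ i ≤ j ≤ d−1}`
is a `ℂ`-basis of the degree-`(d−2)` homogeneous component of `ℂ[T,T',T'']`. -/
theorem stmt7 (d : ℕ) (hd : 2 ≤ d) :
    LinearIndependent ℂ (fun p : {p : ℕ × ℕ // 1 ≤ p.1 ∧ p.1 ≤ p.2 ∧ p.2 ≤ d - 1} =>
        X 1 ^ (d - p.1.2 - 1) * X 2 ^ (p.1.1 - 1) * Psi (p.1.2 - p.1.1)) ∧
    Submodule.span ℂ (Set.range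
        (fun p : {p : ℕ × ℕ // 1 ≤ p.1 ∧ p.1 ≤ p.2 ∧ p.2 ≤ d - 1} =>
          X 1 ^ (d - p.1.2 - 1) * X 2 ^ (p.1.1 - 1) * Psi (p.1.2 - p.1.1))) =
      homogeneousSubmodule (Fin 3) ℂ (d - 2) := by
  have hspan : span ℂ (range (psiFamily d)) = homogeneousSubmodule (Fin 3) ℂ (d - 2) :=
    (span_range_eq_of_sub_mem_span_lt gap (psiFamily_sub_monomial_mem_span hd)).trans
      (span_monomial_exponent hd)
  exact ⟨(linearIndependent_monomial_exponent d).of_span_range_eq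
    (hspan.trans (span_monomial_exponent hd).symm), hspan⟩
end

section
/- The kernel of ε is the ideal of ℂ[A_0,…,A_d] generated by the polynomials A_{i−1}·A_{j+1} − A_i·A_j for 1 ≤ i ≤ j ≤ d−1. -/
/-!
A monomial `∏ A_{a_k}` is sent by `ε` to `t^{kd - s} u^s`, where `k` is its degree and
`s = ∑ a_k` its weight; so `ker ε` is spanned by differences of monomials with the same `k` and
`s`, and it suffices that any two such monomials agree modulo the quadrics
`A_i A_{j+1} - A_{i+1} A_j`. This follows greedily: modulo the quadrics, the largest index of a
monomial can be pushed up to `min s d` (trading `A_x A_y` for `A_{x-1} A_{y+1}` when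
`x ≤ y < d`); splitting off that factor, both monomials reduce to ones of degree `k - 1` with
the same weight.
-/

open MvPolynomial

/-- The variable `A_j` of `ℂ[A_0,…,A_d]` (for `0 ≤ j ≤ d`; the value for `j > d` is
irrelevant). -/
noncomputable def Av (d j : ℕ) : MvPolynomial (Fin (d + 1)) ℂ :=
  if h : j < d + 1 then X ⟨j, h⟩ else 0

/-- The homomorphism `ε : ℂ[A_0,…,A_d] → ℂ[t,u]`, `A_i ↦ t^{d−i}·u^i`, with `t = X 0`,
`u = X 1`. -/
noncomputable def eps (d : ℕ) : MvPolynomial (Fin (d + 1)) ℂ →ₐ[ℂ] MvPolynomial (Fin 2) ℂ :=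
  MvPolynomial.aeval (fun i => X 0 ^ (d - (i : ℕ)) * X 1 ^ (i : ℕ))

theorem MvPolynomial.ker_le_of_monomial_sub_mem {σ τ R : Type*} [CommRing R]
    (f : MvPolynomial σ R →ₐ[R] MvPolynomial τ R) (φ : (σ →₀ ℕ) → (τ →₀ ℕ))
    (hf : ∀ a, f (monomial a 1) = monomial (φ a) 1) (I : Ideal (MvPolynomial σ R))
    (hI : ∀ a b, φ a = φ b → monomial a 1 - monomial b 1 ∈ I) :
    RingHom.ker f ≤ I := by
  -- `ψ ∘ f` replaces every monomial by a fixed representative of its fibre under `φ`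
  let ψ := (basisMonomials τ R).constr R fun b => monomial (Function.invFun φ b) (1 : R)
  have hψ : ∀ a, ψ (f (monomial a 1)) = monomial (Function.invFun φ (φ a)) 1 := fun a => by
    rw [hf]
    exact (basisMonomials τ R).constr_basis R _ (φ a)
  have hsub : ∀ P, P - ψ (f P) ∈ I := by
    intro P
    induction P using MvPolynomial.induction_on' with
    | monomial a r =>
      rw [← mul_one r, ← smul_eq_mul, ← smul_monomial, map_smul, map_smul, ← smul_sub, hψ,
        smul_eq_C_mul]
      exact I.mul_mem_left _ (hI _ _ (Function.invFun_eq ⟨a, rfl⟩).symm)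
    | add P Q hP hQ =>
      rw [map_add, map_add, add_sub_add_comm]
      exact I.add_mem hP hQ
  intro P hP
  simpa [RingHom.mem_ker.mp hP] using hsub P

namespace Multiset

variable {S : Type*} [CommMonoid S] {d : ℕ} {B : ℕ → S}

theorem exists_mul_prod_map_eq_mul_prod_map
    (hB : ∀ i j, i < j → j < d → B i * B (j + 1) = B (i + 1) * B j)
    {s y : ℕ} {m : Multiset ℕ} (hy : y ≤ d) (hm : ∀ a ∈ m, a ≤ d) (hs : y + m.sum = s) :
    ∃ m' : Multiset ℕ, card m' = card m ∧ (∀ a ∈ m', a ≤ d) ∧ min s d + m'.sum = s ∧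
      B y * (m.map B).prod = B (min s d) * (m'.map B).prod := by
  induction hn : min s d - y using Nat.strong_induction_on generalizing y m with
  | _ n ih =>
  obtain rfl | hlt : y = min s d ∨ y < min s d := by omega
  · exact ⟨m, rfl, hm, hs, rfl⟩
  obtain ⟨x, hxm, hx⟩ : ∃ x ∈ m, x ≠ 0 := by
    by_contra! h
    rw [sum_eq_zero h] at hs
    omega
  obtain ⟨r, rfl⟩ := exists_cons_of_mem hxm
  simp only [mem_cons, forall_eq_or_imp, sum_cons] at hm hs
  rcases le_or_gt x y with hxy | hyx
  · obtain ⟨m', hcard, hbound, hsum, hprod⟩ :=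
      @ih _ (by omega) (y + 1) ((x - 1) ::ₘ r) (by omega)
        (by simpa using ⟨by omega, hm.2⟩) (by simp; omega) rfl
    refine ⟨m', by simpa using hcard, hbound, hsum, ?_⟩
    have hrel := hB (x - 1) y (by omega) (by omega)
    rw [Nat.sub_add_cancel (Nat.pos_of_ne_zero hx)] at hrel
    rw [← hprod]
    simp only [map_cons, prod_cons]
    rw [← mul_assoc, ← mul_assoc, mul_comm (B (y + 1)), hrel, mul_comm (B x)]
  · obtain ⟨m', hcard, hbound, hsum, hprod⟩ :=
      @ih _ (by omega) x (y ::ₘ r) hm.1 (by simpa using ⟨hy, hm.2⟩) (by simp; omega) rfl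
    refine ⟨m', by simpa using hcard, hbound, hsum, ?_⟩
    rw [← hprod]
    simp only [map_cons, prod_cons]
    exact mul_left_comm _ _ _

theorem prod_map_eq_of_card_eq_of_sum_eq
    (hB : ∀ i j, i < j → j < d → B i * B (j + 1) = B (i + 1) * B j) {m m' : Multiset ℕ}
    (hm : ∀ a ∈ m, a ≤ d) (hm' : ∀ a ∈ m', a ≤ d) (hcard : card m = card m')
    (hsum : m.sum = m'.sum) : (m.map B).prod = (m'.map B).prod := by
  induction hn : card m generalizing m m' with
  | zero =>
    rw [card_eq_zero.mp hn, card_eq_zero.mp (hcard.symm.trans hn)]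
  | succ n ih =>
    obtain ⟨y, r, rfl, hr⟩ := card_eq_succ_iff.mp hn
    obtain ⟨y', r', rfl, hr'⟩ := card_eq_succ_iff.mp (hcard.symm.trans hn)
    simp only [mem_cons, forall_eq_or_imp, sum_cons] at hm hm' hsum
    obtain ⟨t, hcard_t, hbound_t, hsum_t, hprod_t⟩ :=
      exists_mul_prod_map_eq_mul_prod_map hB hm.1 hm.2 rfl
    obtain ⟨t', hcard_t', hbound_t', hsum_t', hprod_t'⟩ :=
      exists_mul_prod_map_eq_mul_prod_map hB hm'.1 hm'.2 hsum.symm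
    simp only [map_cons, prod_cons]
    rw [hprod_t, hprod_t', ih hbound_t hbound_t' (by omega) (by omega) (by omega)]

theorem sum_map_tsub_add_sum {m : Multiset ℕ} (hm : ∀ a ∈ m, a ≤ d) :
    (m.map (d - ·)).sum + m.sum = card m * d := by
  induction m using Multiset.induction with
  | empty => simp
  | cons a m ih =>
    simp only [mem_cons, forall_eq_or_imp] at hm
    simp only [map_cons, sum_cons, card_cons, add_mul, one_mul, ← ih hm.2]
    omega

end Multiset

def hankelMinors (d : ℕ) : Set (MvPolynomial (Fin (d + 1)) ℂ) :=
  {P | ∃ i j : ℕ, 1 ≤ i ∧ i ≤ j ∧ j ≤ d - 1 ∧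
    P = Av d (i - 1) * Av d (j + 1) - Av d i * Av d j}

theorem Av_val {d : ℕ} (i : Fin (d + 1)) : Av d i = X i := by
  rw [Av, dif_pos i.is_lt]

theorem le_of_mem_map_val_toMultiset {d j : ℕ} {a : Fin (d + 1) →₀ ℕ}
    (hj : j ∈ a.toMultiset.map Fin.val) : j ≤ d := by
  obtain ⟨i, -, rfl⟩ := Multiset.mem_map.mp hj
  exact i.is_le

theorem monomial_one_eq_prod_map_Av {d : ℕ} (a : Fin (d + 1) →₀ ℕ) :
    monomial a (1 : ℂ) = ((a.toMultiset.map Fin.val).map (Av d)).prod := by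
  rw [Multiset.map_map, Function.comp_def]
  simp only [Av_val]
  rw [monomial_eq, C_1, one_mul, Finsupp.toMultiset_map, Finsupp.prod_toMultiset,
    Finsupp.prod_mapDomain_index_inj X_injective]

theorem eps_Av {d j : ℕ} (hj : j ≤ d) : eps d (Av d j) = X 0 ^ (d - j) * X 1 ^ j := by
  simp [Av, eps, Nat.lt_succ_of_le hj]

theorem eps_prod_map_Av {d : ℕ} {m : Multiset ℕ} (hm : ∀ a ∈ m, a ≤ d) :
    eps d (m.map (Av d)).prod =
      monomial (Finsupp.single 0 (m.map (d - ·)).sum + Finsupp.single 1 m.sum) 1 := by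
  induction m using Multiset.induction with
  | empty => simp
  | cons a m ih =>
    simp only [Multiset.mem_cons, forall_eq_or_imp] at hm
    simp only [Multiset.map_cons, Multiset.prod_cons, Multiset.sum_cons, map_mul, eps_Av hm.1,
      ih hm.2, X_pow_eq_monomial, monomial_mul, one_mul, Finsupp.single_add]
    exact congrArg (monomial · 1) (add_add_add_comm _ _ _ _)

theorem hankelMinors_subset_ker (d : ℕ) : hankelMinors d ⊆ RingHom.ker (eps d) := by
  have eps_Av_mul_Av : ∀ a b, a ≤ d → b ≤ d → eps d (Av d a * Av d b) =
      monomial (Finsupp.single 0 ((d - a) + (d - b)) + Finsupp.single 1 (a + b)) 1 := by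
    intro a b ha hb
    simpa using eps_prod_map_Av (m := {a, b}) (by simp [ha, hb])
  rintro P ⟨i, j, hi, hij, hj, rfl⟩
  rw [SetLike.mem_coe, RingHom.mem_ker, map_sub, eps_Av_mul_Av _ _ (by omega) (by omega),
    eps_Av_mul_Av _ _ (by omega) (by omega), sub_eq_zero]
  congr 4 <;> omega

theorem mk_Av_mul_Av_succ {d i j : ℕ} (hij : i < j) (hj : j < d) :
    Ideal.Quotient.mk (Ideal.span (hankelMinors d)) (Av d i * Av d (j + 1)) =
      Ideal.Quotient.mk (Ideal.span (hankelMinors d)) (Av d (i + 1) * Av d j) := by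
  refine Ideal.Quotient.eq.mpr (Ideal.subset_span ⟨i + 1, j, by omega, by omega, by omega, ?_⟩)
  rw [Nat.add_sub_cancel]

theorem monomial_sub_mem_span_hankelMinors {d : ℕ} {a b : Fin (d + 1) →₀ ℕ}
    (hcard : Multiset.card a.toMultiset = Multiset.card b.toMultiset)
    (hsum : (a.toMultiset.map Fin.val).sum = (b.toMultiset.map Fin.val).sum) :
    monomial a 1 - monomial b 1 ∈ Ideal.span (hankelMinors d) := by
  rw [← Ideal.Quotient.eq, monomial_one_eq_prod_map_Av, monomial_one_eq_prod_map_Av,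
    map_multiset_prod, map_multiset_prod, Multiset.map_map _ (Av d), Multiset.map_map _ (Av d)]
  refine Multiset.prod_map_eq_of_card_eq_of_sum_eq
    (fun _ _ hij hj => by simpa only [Function.comp_apply, map_mul] using mk_Av_mul_Av_succ hij hj)
    (fun _ => le_of_mem_map_val_toMultiset) (fun _ => le_of_mem_map_val_toMultiset)
    (by simpa using hcard) hsum

theorem ker_eps_le_span_hankelMinors {d : ℕ} (hd : 1 ≤ d) :
    RingHom.ker (eps d) ≤ Ideal.span (hankelMinors d) := by
  have hbound (a : Fin (d + 1) →₀ ℕ) : ∀ j ∈ a.toMultiset.map Fin.val, j ≤ d :=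
    fun _ => le_of_mem_map_val_toMultiset
  refine MvPolynomial.ker_le_of_monomial_sub_mem (eps d)
    (fun a => Finsupp.single 0 ((a.toMultiset.map Fin.val).map (d - ·)).sum +
      Finsupp.single 1 (a.toMultiset.map Fin.val).sum)
    (fun a => by rw [monomial_one_eq_prod_map_Av, eps_prod_map_Av (hbound a)]) _
    fun a b hab => ?_
  have h0 := congrArg (· 0) hab
  have h1 := congrArg (· 1) hab
  simp only [Finsupp.coe_add, Pi.add_apply, Finsupp.single_eq_same, ne_eq, zero_ne_one,
    one_ne_zero, not_false_eq_true, Finsupp.single_eq_of_ne, add_zero, zero_add] at h0 h1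
  refine monomial_sub_mem_span_hankelMinors ?_ h1
  have hcard : Multiset.card (a.toMultiset.map Fin.val) =
      Multiset.card (b.toMultiset.map Fin.val) := Nat.eq_of_mul_eq_mul_right hd <| by
    rw [← Multiset.sum_map_tsub_add_sum (hbound a), ← Multiset.sum_map_tsub_add_sum (hbound b),
      h0, h1]
  rwa [Multiset.card_map, Multiset.card_map] at hcard

/-- `ker ε` is the ideal generated by the polynomials
`A_{i−1}·A_{j+1} − A_i·A_j` for `1 ≤ i ≤ j ≤ d−1`. -/
theorem stmt12 (d : ℕ) (hd : 1 ≤ d) :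
    RingHom.ker (eps d) = Ideal.span
      {P | ∃ i j : ℕ, 1 ≤ i ∧ i ≤ j ∧ j ≤ d - 1 ∧
        P = Av d (i - 1) * Av d (j + 1) - Av d i * Av d j} :=
  le_antisymm (ker_eps_le_span_hankelMinors hd) (Ideal.span_le.mpr (hankelMinors_subset_ker d))
end
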